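/- arXiv:2404.05612 — 2 statements merged into one kernel-verified Lean document; each statement's English description precedes it below -/
import Mathlib

section
/- Let ζ ∈ (0,1), ε > 0, and let a, b > 0. Then (a - b) · (a^{-(1-ζ)} - b^{-(1-ζ)}) ≤ - (4(1-ζ)/ζ²) · ((a - b)/(a - b)) · (a^{ζ/2} - b^{ζ/2})², i.e. for all a, b > 0 with a ≠ b one has (a - b)(a^{-(1-ζ)} - b^{-(1-ζ)}) ≤ -(4(1-ζ)/ζ²)(a^{ζ/2} - b^{ζ/2})². -/
/-!
Write `a ^ (ζ/2) - b ^ (ζ/2) = (ζ/2) ∫_b^a ξ ^ (ζ/2 - 1) dξ` and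
`b ^ (ζ-1) - a ^ (ζ-1) = (1-ζ) ∫_b^a ξ ^ (ζ - 2) dξ`. The second integrand is the square of the
first, so the Cauchy–Schwarz inequality `(∫_b^a g)² ≤ (a - b) ∫_b^a g²` gives the estimate.
-/

open Real Set MeasureTheory
open scoped Interval

theorem sq_intervalIntegral_le_of_le {g : ℝ → ℝ} {a b : ℝ} (hab : a ≤ b)
    (hg : IntervalIntegrable g volume a b)
    (hg2 : IntervalIntegrable (fun x => g x ^ 2) volume a b) :
    (∫ x in a..b, g x) ^ 2 ≤ (b - a) * ∫ x in a..b, g x ^ 2 := by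
  set I := ∫ x in a..b, g x
  set J := ∫ x in a..b, g x ^ 2
  -- Cauchy–Schwarz as the nonnegativity of the variance of `g` on `[a, b]`.
  have hexpand : ∫ x in a..b, ((b - a) * g x - I) ^ 2 = (b - a) * ((b - a) * J - I ^ 2) := by
    have hsq : ∀ x, ((b - a) * g x - I) ^ 2
        = (b - a) ^ 2 * g x ^ 2 - (2 * (b - a) * I) * g x + I ^ 2 := fun x => by ring
    simp_rw [hsq]
    rw [intervalIntegral.integral_add ((hg2.const_mul _).sub (hg.const_mul _))
        intervalIntegrable_const,
      intervalIntegral.integral_sub (hg2.const_mul _) (hg.const_mul _),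
      intervalIntegral.integral_const_mul, intervalIntegral.integral_const_mul,
      intervalIntegral.integral_const, smul_eq_mul]
    ring
  have hnonneg : 0 ≤ (b - a) * ((b - a) * J - I ^ 2) :=
    hexpand ▸ intervalIntegral.integral_nonneg hab fun x _ => sq_nonneg _
  rcases hab.eq_or_lt with rfl | hlt
  · simp [I, J]
  · nlinarith [(mul_nonneg_iff_of_pos_left (sub_pos.2 hlt)).1 hnonneg]

theorem sq_intervalIntegral_le {g : ℝ → ℝ} {a b : ℝ}
    (hg : IntervalIntegrable g volume a b)
    (hg2 : IntervalIntegrable (fun x => g x ^ 2) volume a b) :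
    (∫ x in a..b, g x) ^ 2 ≤ (b - a) * ∫ x in a..b, g x ^ 2 := by
  rcases le_total a b with hab | hba
  · exact sq_intervalIntegral_le_of_le hab hg hg2
  · rw [intervalIntegral.integral_symm b a, intervalIntegral.integral_symm b a, neg_sq, mul_neg,
      ← neg_mul, neg_sub]
    exact sq_intervalIntegral_le_of_le hba hg.symm hg2.symm

theorem sq_rpow_sub_rpow_div_le {p a b : ℝ} (hp : p ≠ 0) (hp' : 2 * p - 1 ≠ 0)
    (ha : 0 < a) (hb : 0 < b) :
    ((a ^ p - b ^ p) / p) ^ 2 ≤ (a - b) * ((a ^ (2 * p - 1) - b ^ (2 * p - 1)) / (2 * p - 1)) := by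
  have h0 : (0 : ℝ) ∉ [[b, a]] := notMem_uIcc_of_lt hb ha
  have hsq : EqOn (fun x : ℝ => (x ^ (p - 1)) ^ 2) (fun x => x ^ (2 * p - 2)) [[b, a]] := by
    intro x hx
    have hx0 : 0 < x := (lt_min hb ha).trans_le (by simpa using hx.1)
    show (x ^ (p - 1)) ^ 2 = x ^ (2 * p - 2)
    rw [← rpow_natCast, ← rpow_mul hx0.le]
    ring_nf
  have hI : ∫ x in b..a, x ^ (p - 1) = (a ^ p - b ^ p) / p := by
    rw [integral_rpow (Or.inr ⟨by contrapose! hp; linarith, h0⟩), sub_add_cancel]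
  have hJ : ∫ x in b..a, (x ^ (p - 1)) ^ 2 = (a ^ (2 * p - 1) - b ^ (2 * p - 1)) / (2 * p - 1) := by
    rw [intervalIntegral.integral_congr hsq,
      integral_rpow (Or.inr ⟨by contrapose! hp'; linarith, h0⟩)]
    ring_nf
  rw [← hI, ← hJ]
  exact sq_intervalIntegral_le (intervalIntegral.intervalIntegrable_rpow (Or.inr h0))
    ((intervalIntegral.intervalIntegrable_rpow (Or.inr h0)).congr
      (hsq.symm.mono uIoc_subset_uIcc))

theorem stmt_0_general (ζ : ℝ) (hζ : ζ ∈ Set.Ioo (0:ℝ) 1)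
    (a b : ℝ) (ha : 0 < a) (hb : 0 < b) :
    (a - b) * (a ^ (-(1 - ζ)) - b ^ (-(1 - ζ))) ≤
      -(4 * (1 - ζ) / ζ ^ 2) * (a ^ (ζ / 2) - b ^ (ζ / 2)) ^ 2 := by
  obtain ⟨hζ0, hζ1⟩ := hζ
  have key := sq_rpow_sub_rpow_div_le (p := ζ / 2) (by positivity) (by linarith) ha hb
  have hl : ((a ^ (ζ / 2) - b ^ (ζ / 2)) / (ζ / 2)) ^ 2
      = 4 / ζ ^ 2 * (a ^ (ζ / 2) - b ^ (ζ / 2)) ^ 2 := by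
    field_simp; ring
  have hr : (a - b) * ((a ^ (2 * (ζ / 2) - 1) - b ^ (2 * (ζ / 2) - 1)) / (2 * (ζ / 2) - 1))
      = -((a - b) * (a ^ (-(1 - ζ)) - b ^ (-(1 - ζ)))) / (1 - ζ) := by
    rw [show 2 * (ζ / 2) - 1 = -(1 - ζ) by ring, div_neg]; ring
  rw [hl, hr, le_div_iff₀ (by linarith)] at key
  calc _ ≤ -(4 / ζ ^ 2 * (a ^ (ζ / 2) - b ^ (ζ / 2)) ^ 2 * (1 - ζ)) := by linarith
    _ = _ := by ring

/-- Concavity estimate (3.1): for ζ ∈ (0,1) and a, b > 0 with a ≠ b,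
(a - b)(a^{-(1-ζ)} - b^{-(1-ζ)}) ≤ -(4(1-ζ)/ζ²)(a^{ζ/2} - b^{ζ/2})². -/
theorem stmt_0 (ζ : ℝ) (hζ : ζ ∈ Set.Ioo (0:ℝ) 1) (ε : ℝ) (hε : 0 < ε)
    (a b : ℝ) (ha : 0 < a) (hb : 0 < b) (hab : a ≠ b) :
    (a - b) * (a ^ (-(1 - ζ)) - b ^ (-(1 - ζ))) ≤
      -(4 * (1 - ζ) / ζ ^ 2) * (a ^ (ζ / 2) - b ^ (ζ / 2)) ^ 2 :=
  stmt_0_general ζ hζ a b ha hb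
end

section
/- Let ζ ∈ (0,1) and a, b > 0 with a ≠ b. Then min{a^{-(1-ζ)}, b^{-(1-ζ)}} · |a - b| ≤ (2/ζ) · max{a^{ζ/2}, b^{ζ/2}} · |a^{ζ/2} - b^{ζ/2}|. -/
/-! For `p = ζ / 2 ∈ (0, 1)` the map `x ↦ x ^ p` is concave, so it lies below its tangent line at
the larger point `b`: `p * b ^ (p - 1) * (b - a) ≤ b ^ p - a ^ p`. Multiplying by
`b ^ p / p = (2 / ζ) * b ^ (ζ / 2)` and using `b ^ p * b ^ (p - 1) = b ^ (ζ - 1)` gives the estimate;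
at the larger point `b` the `min` and the `max` are attained. -/

open Real

theorem rpow_le_tangent_of_le_one {p a b : ℝ} (hp0 : 0 ≤ p) (hp1 : p ≤ 1) (ha : 0 ≤ a)
    (hb : 0 < b) : a ^ p ≤ b ^ p + p * b ^ (p - 1) * (a - b) := by
  have bernoulli : (a / b) ^ p ≤ 1 + p * (a / b - 1) := by
    simpa using rpow_one_add_le_one_add_mul_self (s := a / b - 1)
      (by linarith [div_nonneg ha hb.le]) hp0 hp1
  have hbp : 0 < b ^ p := rpow_pos_of_pos hb p
  rw [div_rpow ha hb.le, div_le_iff₀ hbp] at bernoulli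
  calc a ^ p ≤ (1 + p * (a / b - 1)) * b ^ p := bernoulli
    _ = b ^ p + p * b ^ (p - 1) * (a - b) := by
      rw [rpow_sub_one hb.ne']
      field_simp

theorem rpow_neg_one_sub_mul_sub_le {ζ a b : ℝ} (hζ0 : 0 < ζ) (hζ2 : ζ ≤ 2) (ha : 0 ≤ a)
    (hb : 0 < b) :
    b ^ (-(1 - ζ)) * (b - a) ≤ 2 / ζ * b ^ (ζ / 2) * (b ^ (ζ / 2) - a ^ (ζ / 2)) := by
  have tangent := rpow_le_tangent_of_le_one (p := ζ / 2) (by linarith) (by linarith) ha hb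
  have hsplit : b ^ (-(1 - ζ)) = b ^ (ζ / 2) * b ^ (ζ / 2 - 1) := by
    rw [← rpow_add hb]
    ring_nf
  calc b ^ (-(1 - ζ)) * (b - a)
      = 2 / ζ * b ^ (ζ / 2) * (ζ / 2 * b ^ (ζ / 2 - 1) * (b - a)) := by
        rw [hsplit]
        field_simp
    _ ≤ 2 / ζ * b ^ (ζ / 2) * (b ^ (ζ / 2) - a ^ (ζ / 2)) := by
        gcongr
        linarith

theorem stmt_1_general (ζ a b : ℝ) (hζ : ζ ∈ Set.Ioo (0:ℝ) 1) (ha : 0 < a) (hb : 0 < b) :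
    min (a ^ (-(1 - ζ))) (b ^ (-(1 - ζ))) * |a - b| ≤
      (2 / ζ) * max (a ^ (ζ / 2)) (b ^ (ζ / 2)) * |a ^ (ζ / 2) - b ^ (ζ / 2)| := by
  obtain ⟨hζ0, hζ1⟩ := hζ
  have hneg : -(1 - ζ) ≤ 0 := by linarith
  have hpos : 0 ≤ ζ / 2 := by linarith
  rcases le_total a b with hab | hba
  · rw [min_eq_right (rpow_le_rpow_of_nonpos ha hab hneg),
      max_eq_right (rpow_le_rpow ha.le hab hpos), abs_sub_comm,
      abs_of_nonneg (sub_nonneg.2 hab), abs_sub_comm,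
      abs_of_nonneg (sub_nonneg.2 (rpow_le_rpow ha.le hab hpos))]
    exact rpow_neg_one_sub_mul_sub_le hζ0 (by linarith) ha.le hb
  · rw [min_eq_left (rpow_le_rpow_of_nonpos hb hba hneg),
      max_eq_left (rpow_le_rpow hb.le hba hpos), abs_of_nonneg (sub_nonneg.2 hba),
      abs_of_nonneg (sub_nonneg.2 (rpow_le_rpow hb.le hba hpos))]
    exact rpow_neg_one_sub_mul_sub_le hζ0 (by linarith) hb.le ha

/-- Estimate (3.2): for ζ ∈ (0,1) and a, b > 0 with a ≠ b,
min{a^{-(1-ζ)}, b^{-(1-ζ)}}·|a - b| ≤ (2/ζ)·max{a^{ζ/2}, b^{ζ/2}}·|a^{ζ/2} - b^{ζ/2}|. -/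
theorem stmt_1 (ζ a b : ℝ) (hζ : ζ ∈ Set.Ioo (0:ℝ) 1) (ha : 0 < a) (hb : 0 < b)
    (hab : a ≠ b) :
    min (a ^ (-(1 - ζ))) (b ^ (-(1 - ζ))) * |a - b| ≤
      (2 / ζ) * max (a ^ (ζ / 2)) (b ^ (ζ / 2)) * |a ^ (ζ / 2) - b ^ (ζ / 2)| :=
  stmt_1_general ζ a b hζ ha hb
end
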